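/- arXiv:1306.4093 — 2 statements merged into one kernel-verified Lean document; each statement's English description precedes it below -/
import Mathlib

section
/- Let A be a complex unital Banach algebra with unit e and let a, b, c ∈ A be such that a has a Moore-Penrose inverse a†, a = bc, b⁻¹(0) = 0, and cA = A; let b† and c† denote the Moore-Penrose inverses of b and c. Then the following statements are equivalent: (i) a is EP; (ii) bb† = c†c; (iii) (b†)⁻¹(0) = c⁻¹(0); (iv) bA = c†A; (v) b₋₁(0) = (c†)₋₁(0); (vi) Ac = Ab†. -/
noncomputable section

/-- An element `h` of a complex normed algebra is *hermitian* if `‖exp (i t h)‖ = 1`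
for all real `t`. -/
def IsHermitianElem {A : Type*} [NormedRing A] [NormedAlgebra ℂ A] (h : A) : Prop :=
  ∀ t : ℝ, ‖NormedSpace.exp ((Complex.I * (t : ℂ)) • h)‖ = 1

/-- `x` is a Moore–Penrose inverse of `a`: `axa = a`, `xax = x`, and `ax`, `xa` are hermitian. -/
def IsMPInv {A : Type*} [NormedRing A] [NormedAlgebra ℂ A] (a x : A) : Prop :=
  a * x * a = a ∧ x * a * x = x ∧ IsHermitianElem (a * x) ∧ IsHermitianElem (x * a)

/-!
Every hermitian idempotent `p` has `‖1 - 2p‖ = 1`, because `1 - 2p = exp (iπ p)`. If two such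
idempotents `p`, `q` satisfy `pq = q` and `qp = p`, then `d = q - p` squares to zero and
`(1 - 2p)(1 - 2q) = 1 + 2d`, whose powers `1 + 2nd` stay bounded; hence `d = 0`. So a hermitian
idempotent is determined by its right ideal, equivalently by its left annihilator (and dually).

The conditions (ii)–(vi) all compare the hermitian idempotents `bb†` and `c†c` in this way,
since `x`, `xy` generate the same right ideal and have the same left annihilator when `xyx = x`.
Finally `aa† = bb†` and `a†a = c†c`, because `aA = bA` (as `cc† = e`) and `Aa = Ac`
(as `b†b = e`), which gives (i) ⇔ (ii).
-/

section Definitions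

variable {M : Type*} [Mul M]

-- `aA`, `Aa`, `a⁻¹(0)` and `a₋₁(0)` in the paper's notation.
def rightMultiples (a : M) : Set M := {y | ∃ x, y = a * x}

def leftMultiples (a : M) : Set M := {y | ∃ x, y = x * a}

def rightAnnihilator [Zero M] (a : M) : Set M := {x | a * x = 0}

def leftAnnihilator [Zero M] (a : M) : Set M := {x | x * a = 0}

end Definitions

section Monoid

variable {M : Type*} [Monoid M]

theorem rightMultiples_mul_eq_of_mul_mul_eq {x y : M} (h : x * y * x = x) :
    rightMultiples (x * y) = rightMultiples x := by
  ext z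
  constructor
  · rintro ⟨w, rfl⟩
    exact ⟨y * w, mul_assoc x y w⟩
  · rintro ⟨w, rfl⟩
    exact ⟨x * w, by rw [← mul_assoc, h]⟩

theorem leftMultiples_mul_eq_of_mul_mul_eq {x y : M} (h : y * x * y = y) :
    leftMultiples (x * y) = leftMultiples y := by
  ext z
  constructor
  · rintro ⟨w, rfl⟩
    exact ⟨w * x, (mul_assoc w x y).symm⟩
  · rintro ⟨w, rfl⟩
    exact ⟨w * y, by rw [mul_assoc, ← mul_assoc y, h]⟩

theorem rightMultiples_mul_of_mul_eq_one {x y z : M} (h : y * z = 1) :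
    rightMultiples (x * y) = rightMultiples x := by
  ext w
  constructor
  · rintro ⟨v, rfl⟩
    exact ⟨y * v, mul_assoc x y v⟩
  · rintro ⟨v, rfl⟩
    exact ⟨z * v, by rw [mul_assoc, ← mul_assoc y, h, one_mul]⟩

theorem leftMultiples_mul_of_mul_eq_one {x y z : M} (h : z * x = 1) :
    leftMultiples (x * y) = leftMultiples y := by
  ext w
  constructor
  · rintro ⟨v, rfl⟩
    exact ⟨v * x, (mul_assoc v x y).symm⟩
  · rintro ⟨v, rfl⟩
    exact ⟨v * z, by rw [mul_assoc, ← mul_assoc z, h, one_mul]⟩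

theorem mul_eq_one_of_rightMultiples_eq_univ {x y : M} (h : x * y * x = x)
    (hx : rightMultiples x = Set.univ) : x * y = 1 := by
  obtain ⟨w, hw⟩ : (1 : M) ∈ rightMultiples x := hx ▸ Set.mem_univ 1
  rw [← mul_one (x * y), hw, ← mul_assoc, h]

theorem IsIdempotentElem.rightMultiples_subset_iff {p q : M} (hq : IsIdempotentElem q) :
    rightMultiples p ⊆ rightMultiples q ↔ q * p = p := by
  constructor
  · intro h
    obtain ⟨w, hw⟩ := h ⟨1, (mul_one p).symm⟩
    rw [hw, ← mul_assoc, hq.eq]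
  · rintro h _ ⟨w, rfl⟩
    exact ⟨p * w, by rw [← mul_assoc, h]⟩

theorem IsIdempotentElem.leftMultiples_subset_iff {p q : M} (hq : IsIdempotentElem q) :
    leftMultiples p ⊆ leftMultiples q ↔ p * q = p := by
  constructor
  · intro h
    obtain ⟨w, hw⟩ := h ⟨1, (one_mul p).symm⟩
    rw [hw, mul_assoc, hq.eq]
  · rintro h _ ⟨w, rfl⟩
    exact ⟨w * p, by rw [mul_assoc, h]⟩

end Monoid

section MonoidWithZero

variable {M : Type*} [MonoidWithZero M]

theorem leftAnnihilator_mul_eq_of_mul_mul_eq {x y : M} (h : x * y * x = x) :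
    leftAnnihilator (x * y) = leftAnnihilator x := by
  ext z
  constructor
  · intro hz
    change z * x = 0
    rw [← h, ← mul_assoc, ← mul_assoc, mul_assoc z, hz, zero_mul]
  · intro hz
    change z * (x * y) = 0
    rw [← mul_assoc, hz, zero_mul]

theorem rightAnnihilator_mul_eq_of_mul_mul_eq {x y : M} (h : y * x * y = y) :
    rightAnnihilator (x * y) = rightAnnihilator y := by
  ext z
  constructor
  · intro hz
    change y * z = 0
    rw [← h, mul_assoc, mul_assoc, ← mul_assoc x, hz, mul_zero]
  · intro hz
    change x * y * z = 0
    rw [mul_assoc, hz, mul_zero]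

end MonoidWithZero

section Ring

variable {R : Type*} [Ring R]

theorem mul_eq_one_of_rightAnnihilator_eq_zero {x y : R} (h : x * y * x = x)
    (hx : rightAnnihilator x = {0}) : y * x = 1 := by
  have hmem : y * x - 1 ∈ rightAnnihilator x := by
    change x * (y * x - 1) = 0
    rw [mul_sub, mul_one, ← mul_assoc, h, sub_self]
  rw [hx] at hmem
  exact sub_eq_zero.mp hmem

theorem IsIdempotentElem.leftAnnihilator_subset_iff {p q : R} (hq : IsIdempotentElem q) :
    leftAnnihilator q ⊆ leftAnnihilator p ↔ q * p = p := by
  constructor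
  · intro h
    have hmem : 1 - q ∈ leftAnnihilator p := h (by
      change (1 - q) * q = 0
      rw [sub_mul, one_mul, hq.eq, sub_self])
    change (1 - q) * p = 0 at hmem
    rw [sub_mul, one_mul, sub_eq_zero] at hmem
    exact hmem.symm
  · intro h x hx
    change x * p = 0
    rw [← h, ← mul_assoc, hx, zero_mul]

theorem IsIdempotentElem.rightAnnihilator_subset_iff {p q : R} (hq : IsIdempotentElem q) :
    rightAnnihilator q ⊆ rightAnnihilator p ↔ p * q = p := by
  constructor
  · intro h
    have hmem : 1 - q ∈ rightAnnihilator p := h (by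
      change q * (1 - q) = 0
      rw [mul_sub, mul_one, hq.eq, sub_self])
    change p * (1 - q) = 0 at hmem
    rw [mul_sub, mul_one, sub_eq_zero] at hmem
    exact hmem.symm
  · intro h x hx
    change p * x = 0
    rw [← h, mul_assoc, hx, mul_zero]

theorem IsIdempotentElem.leftAnnihilator_eq_iff {p q : R} (hp : IsIdempotentElem p)
    (hq : IsIdempotentElem q) :
    leftAnnihilator p = leftAnnihilator q ↔ rightMultiples p = rightMultiples q := by
  rw [Set.Subset.antisymm_iff, Set.Subset.antisymm_iff, hp.leftAnnihilator_subset_iff,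
    hq.leftAnnihilator_subset_iff, hp.rightMultiples_subset_iff, hq.rightMultiples_subset_iff,
    and_comm]

theorem IsIdempotentElem.rightAnnihilator_eq_iff {p q : R} (hp : IsIdempotentElem p)
    (hq : IsIdempotentElem q) :
    rightAnnihilator p = rightAnnihilator q ↔ leftMultiples p = leftMultiples q := by
  rw [Set.Subset.antisymm_iff, Set.Subset.antisymm_iff, hp.rightAnnihilator_subset_iff,
    hq.rightAnnihilator_subset_iff, hp.leftMultiples_subset_iff, hq.leftMultiples_subset_iff,
    and_comm]

end Ring

section NormedAlgebra

open scoped Nat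

variable {A : Type*} [NormedRing A] [NormedAlgebra ℂ A]

theorem NormedSpace.exp_smul_of_isIdempotentElem [CompleteSpace A] (z : ℂ) {p : A}
    (hp : IsIdempotentElem p) : NormedSpace.exp (z • p) = (1 - p) + Complex.exp z • p := by
  have hterm (n : ℕ) : (n !⁻¹ : ℂ) • (z • p) ^ n
      = (if n = 0 then 1 - p else 0) + ((n ! : ℂ)⁻¹ • z ^ n) • p := by
    cases n with
    | zero => simp
    | succ n => simp [smul_pow, hp.pow_succ_eq, smul_smul]
  refine (NormedSpace.exp_series_hasSum_exp' (𝕂 := ℂ) (z • p)).unique ?_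
  simp_rw [hterm, Complex.exp_eq_exp_ℂ]
  exact (hasSum_ite_eq 0 (1 - p)).add ((NormedSpace.exp_series_hasSum_exp' z).smul_const p)

theorem eq_zero_of_mul_self_eq_zero_of_norm_one_add_le {x : A} (hx : x * x = 0)
    (hn : ‖1 + x‖ ≤ 1) : x = 0 := by
  have hpow (n : ℕ) : (1 + x) ^ n = 1 + (n : ℂ) • x := by
    induction n with
    | zero => simp
    | succ n ih =>
      simp only [pow_succ, ih, add_mul, mul_add, one_mul, mul_one, smul_mul_assoc, hx, smul_zero,
        add_zero, Nat.cast_succ, add_smul, one_smul]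
      abel
  have hbound (n : ℕ) : (n + 1) * ‖x‖ ≤ 1 + ‖(1 : A)‖ :=
    calc (n + 1) * ‖x‖ = ‖(1 + x) ^ (n + 1) - 1‖ := by
          rw [hpow, add_sub_cancel_left, norm_smul]; norm_cast
      _ ≤ ‖(1 + x) ^ (n + 1)‖ + ‖(1 : A)‖ := norm_sub_le _ _
      _ ≤ 1 + ‖(1 : A)‖ := by
          gcongr; exact (norm_pow_le' _ n.succ_pos).trans (pow_le_one₀ (norm_nonneg _) hn)
  by_contra hx0
  obtain ⟨n, hn⟩ := exists_nat_gt ((1 + ‖(1 : A)‖) / ‖x‖)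
  rw [div_lt_iff₀ (norm_pos_iff.mpr hx0)] at hn
  linarith [hbound n, norm_nonneg x]

theorem IsIdempotentElem.eq_of_norm_one_sub_two_mul_le {p q : A} (hp : IsIdempotentElem p)
    (hq : IsIdempotentElem q) (hpn : ‖1 - 2 * p‖ ≤ 1) (hqn : ‖1 - 2 * q‖ ≤ 1)
    (hpq : p * q = q) (hqp : q * p = p) : p = q := by
  have hsq : (2 * (q - p)) * (2 * (q - p)) = 0 := by
    calc (2 * (q - p)) * (2 * (q - p)) = 4 * (q * q - q * p - p * q + p * p) := by noncomm_ring
      _ = 0 := by rw [hq.eq, hp.eq, hpq, hqp]; noncomm_ring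
  have hprod : (1 - 2 * p) * (1 - 2 * q) = 1 + 2 * (q - p) := by
    calc (1 - 2 * p) * (1 - 2 * q) = 1 - 2 * p - 2 * q + 4 * (p * q) := by noncomm_ring
      _ = 1 + 2 * (q - p) := by rw [hpq]; noncomm_ring
  have hnorm : ‖1 + 2 * (q - p)‖ ≤ 1 := by
    rw [← hprod]
    exact (norm_mul_le _ _).trans (mul_le_one₀ hpn (norm_nonneg _) hqn)
  have htwo : (2 : ℂ) • (q - p) = 0 := by
    rw [two_smul, ← two_mul]
    exact eq_zero_of_mul_self_eq_zero_of_norm_one_add_le hsq hnorm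
  exact (sub_eq_zero.mp ((smul_eq_zero.mp htwo).resolve_left two_ne_zero)).symm

def IsHermitianIdempotent (p : A) : Prop :=
  IsIdempotentElem p ∧ IsHermitianElem p

theorem IsMPInv.isHermitianIdempotent_mul_inv {a x : A} (h : IsMPInv a x) :
    IsHermitianIdempotent (a * x) :=
  ⟨by rw [IsIdempotentElem, ← mul_assoc, h.1], h.2.2.1⟩

theorem IsMPInv.isHermitianIdempotent_inv_mul {a x : A} (h : IsMPInv a x) :
    IsHermitianIdempotent (x * a) :=
  ⟨by rw [IsIdempotentElem, ← mul_assoc, h.2.1], h.2.2.2⟩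

variable [CompleteSpace A]

theorem IsHermitianIdempotent.norm_one_sub_two_mul {p : A} (hp : IsHermitianIdempotent p) :
    ‖1 - 2 * p‖ = 1 := by
  have h := hp.2 Real.pi
  rw [mul_comm Complex.I, NormedSpace.exp_smul_of_isIdempotentElem _ hp.1,
    Complex.exp_pi_mul_I, neg_one_smul] at h
  rwa [two_mul, ← sub_sub, sub_eq_add_neg (1 - p)]

theorem IsHermitianIdempotent.rightMultiples_eq_iff {p q : A} (hp : IsHermitianIdempotent p)
    (hq : IsHermitianIdempotent q) : rightMultiples p = rightMultiples q ↔ p = q := by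
  refine ⟨fun h => ?_, fun h => h ▸ rfl⟩
  rw [Set.Subset.antisymm_iff, hq.1.rightMultiples_subset_iff, hp.1.rightMultiples_subset_iff] at h
  exact hp.1.eq_of_norm_one_sub_two_mul_le hq.1 hp.norm_one_sub_two_mul.le
    hq.norm_one_sub_two_mul.le h.2 h.1

-- `Ap = Aq` means `pA = qA` for the complementary idempotents `1 - p` and `1 - q`.
theorem IsHermitianIdempotent.leftMultiples_eq_iff {p q : A} (hp : IsHermitianIdempotent p)
    (hq : IsHermitianIdempotent q) : leftMultiples p = leftMultiples q ↔ p = q := by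
  refine ⟨fun h => ?_, fun h => h ▸ rfl⟩
  rw [Set.Subset.antisymm_iff, hq.1.leftMultiples_subset_iff, hp.1.leftMultiples_subset_iff] at h
  have hreflect (r : A) : 1 - 2 * (1 - r) = -(1 - 2 * r) := by noncomm_ring
  have hcompl : 1 - p = 1 - q := by
    refine hp.1.one_sub.eq_of_norm_one_sub_two_mul_le hq.1.one_sub ?_ ?_ ?_ ?_
    · rw [hreflect, norm_neg, hp.norm_one_sub_two_mul]
    · rw [hreflect, norm_neg, hq.norm_one_sub_two_mul]
    · calc (1 - p) * (1 - q) = 1 - q - (p - p * q) := by noncomm_ring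
        _ = 1 - q := by rw [h.1, sub_self, sub_zero]
    · calc (1 - q) * (1 - p) = 1 - p - (q - q * p) := by noncomm_ring
        _ = 1 - p := by rw [h.2, sub_self, sub_zero]
  exact sub_right_injective hcompl

end NormedAlgebra

/-- If `a = bc` with `b⁻¹(0) = 0`, `cA = A` and Moore–Penrose inverses `a†`, `b†`, `c†`:
`a` is EP iff `bb† = c†c` iff `(b†)⁻¹(0) = c⁻¹(0)` iff `bA = c†A` iff
`b₋₁(0) = (c†)₋₁(0)` iff `Ac = Ab†`. -/
theorem ep_tfae_of_factorization {A : Type*} [NormedRing A] [NormedAlgebra ℂ A] [CompleteSpace A]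
    (a b c ad bd cd : A) (had : IsMPInv a ad) (hbd : IsMPInv b bd) (hcd : IsMPInv c cd)
    (habc : a = b * c)
    (hb : {x : A | b * x = 0} = {0}) (hc : {y : A | ∃ x, y = c * x} = Set.univ) :
    List.TFAE
      [a * ad = ad * a,
       b * bd = cd * c,
       {x : A | bd * x = 0} = {x : A | c * x = 0},
       {y : A | ∃ x, y = b * x} = {y : A | ∃ x, y = cd * x},
       {x : A | x * b = 0} = {x : A | x * cd = 0},
       {y : A | ∃ x, y = x * c} = {y : A | ∃ x, y = x * bd}] := by
  show List.TFAE [a * ad = ad * a, b * bd = cd * c, rightAnnihilator bd = rightAnnihilator c,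
    rightMultiples b = rightMultiples cd, leftAnnihilator b = leftAnnihilator cd,
    leftMultiples c = leftMultiples bd]
  have hP := hbd.isHermitianIdempotent_mul_inv
  have hQ := hcd.isHermitianIdempotent_inv_mul
  have hbb : bd * b = 1 := mul_eq_one_of_rightAnnihilator_eq_zero hbd.1 hb
  have hcc : c * cd = 1 := mul_eq_one_of_rightMultiples_eq_univ hcd.1 hc
  have hPa : a * ad = b * bd := by
    rw [← had.isHermitianIdempotent_mul_inv.rightMultiples_eq_iff hP,
      rightMultiples_mul_eq_of_mul_mul_eq had.1, rightMultiples_mul_eq_of_mul_mul_eq hbd.1, habc,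
      rightMultiples_mul_of_mul_eq_one hcc]
  have hQa : ad * a = cd * c := by
    rw [← had.isHermitianIdempotent_inv_mul.leftMultiples_eq_iff hQ,
      leftMultiples_mul_eq_of_mul_mul_eq had.1, leftMultiples_mul_eq_of_mul_mul_eq hcd.1, habc,
      leftMultiples_mul_of_mul_eq_one hbb]
  tfae_have 1 ↔ 2 := by rw [hPa, hQa]
  tfae_have 2 ↔ 3 := by
    rw [← rightAnnihilator_mul_eq_of_mul_mul_eq hbd.2.1,
      ← rightAnnihilator_mul_eq_of_mul_mul_eq hcd.1,
      hP.1.rightAnnihilator_eq_iff hQ.1, hP.leftMultiples_eq_iff hQ]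
  tfae_have 2 ↔ 4 := by
    rw [← rightMultiples_mul_eq_of_mul_mul_eq hbd.1,
      ← rightMultiples_mul_eq_of_mul_mul_eq hcd.2.1,
      hP.rightMultiples_eq_iff hQ]
  tfae_have 2 ↔ 5 := by
    rw [← leftAnnihilator_mul_eq_of_mul_mul_eq hbd.1,
      ← leftAnnihilator_mul_eq_of_mul_mul_eq hcd.2.1,
      hP.1.leftAnnihilator_eq_iff hQ.1, hP.rightMultiples_eq_iff hQ]
  tfae_have 2 ↔ 6 := by
    rw [← leftMultiples_mul_eq_of_mul_mul_eq hcd.1,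
      ← leftMultiples_mul_eq_of_mul_mul_eq hbd.2.1,
      hQ.leftMultiples_eq_iff hP, eq_comm]
  tfae_finish
end
end

section
/- Let A be a complex unital Banach algebra with unit e and let a, b, c ∈ A be such that a has a Moore-Penrose inverse a†, a = bc, b⁻¹(0) = 0, and cA = A; let b† and c† denote the Moore-Penrose inverses of b and c. Then the following statements are equivalent: (i) a is EP; (ii) there exists an invertible x ∈ A with c = xb†; (iii) there exists y ∈ A with y⁻¹(0) = 0 and c = yb†; (iv) there exists an invertible u ∈ A with b = c†u; (v) there exist z₁, z₂ ∈ A with c = z₁b† and b† = z₂c; (vi) a ∈ c†A ∩ Ab†; (vii) a† ∈ bA ∩ Ac. -/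
noncomputable section

/-!
Write `f = b b†` and `g = c† c`. As `b` is left and `c` right invertible, `b† b = 1` and
`c c† = 1`, and the hermitian idempotents `a a†` and `a† a` turn out to be `f` and `g`; so `a` is
EP iff `f = g`, and each of the other conditions is a relation between `f` and `g`.

The only analytic input is a rigidity property: hermitian idempotents `p`, `r` with `pr = r`,
`rp = p` (or `pr = p`, `rp = r`) are equal. Indeed `exp (iπp) = 1 - 2p`, so `‖1 - 2p‖ = 1`,
while `(1 - 2p)(1 - 2r) = 1 + 2d` with `d² = 0`, whose powers `1 + 2nd` stay in the unit ball
only if `d = 0`.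
-/

theorem eq_zero_of_mul_self_eq_zero_of_norm_one_add_le_one {A : Type*} [NormedRing A]
    [NormedSpace ℝ A] {d : A} (hd : d * d = 0) (h : ‖1 + d‖ ≤ 1) : d = 0 := by
  have hpow : ∀ n : ℕ, (1 + d) ^ (n + 1) = 1 + (n + 1) • d := by
    intro n
    induction n with
    | zero => simp
    | succ n ih =>
      rw [pow_succ, ih, add_mul, one_mul, mul_add, mul_one, smul_mul_assoc, hd, smul_zero,
        add_zero, succ_nsmul _ (n + 1)]
      abel
  have hbound : ∀ n : ℕ, (n + 1) • ‖d‖ ≤ 1 + ‖(1 : A)‖ := fun n =>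
    calc (n + 1) • ‖d‖ = ‖(1 + d) ^ (n + 1) - 1‖ := by
          rw [hpow, add_sub_cancel_left, RCLike.norm_nsmul ℝ]
      _ ≤ ‖(1 + d) ^ (n + 1)‖ + ‖(1 : A)‖ := norm_sub_le _ _
      _ ≤ 1 + ‖(1 : A)‖ := by
          gcongr
          exact (norm_pow_le' _ n.succ_pos).trans (pow_le_one₀ (norm_nonneg _) h)
  by_contra hne
  obtain ⟨n, hn⟩ := exists_lt_nsmul (norm_pos_iff.mpr hne) (1 + ‖(1 : A)‖)
  have := hbound n
  rw [succ_nsmul] at this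
  linarith [norm_nonneg d]

section Hermitian

variable {A : Type*} [NormedRing A] [NormedAlgebra ℂ A]

theorem IsIdempotentElem.exp_smul {p : A} (hp : IsIdempotentElem p) (z : ℂ) :
    NormedSpace.exp (z • p) = 1 - p + Complex.exp z • p := by
  have hterm : ∀ n : ℕ, (n.factorial⁻¹ : ℂ) • (z • p) ^ n
      = (z ^ n / n.factorial) • p + if n = 0 then 1 - p else 0 := by
    rintro (_ | n)
    · simp
    · rw [smul_pow, hp.pow_succ_eq, smul_smul, if_neg n.succ_ne_zero, add_zero, div_eq_inv_mul]
  have hsum : HasSum (fun n : ℕ => (n.factorial⁻¹ : ℂ) • (z • p) ^ n)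
      (Complex.exp z • p + (1 - p)) := by
    simp_rw [hterm]
    rw [Complex.exp_eq_exp_ℂ]
    exact ((NormedSpace.expSeries_div_hasSum_exp z).smul_const p).add (hasSum_ite_eq 0 (1 - p))
  rw [NormedSpace.exp_eq_tsum ℂ, add_comm]
  exact hsum.tsum_eq

theorem IsHermitianElem.norm_one_sub_two_smul {p : A} (hp : IsHermitianElem p)
    (hpi : IsIdempotentElem p) : ‖1 - (2 : ℂ) • p‖ = 1 := by
  have h := hp Real.pi
  rw [hpi.exp_smul, mul_comm, Complex.exp_pi_mul_I] at h
  rwa [neg_one_smul, ← sub_eq_add_neg, sub_sub, ← two_smul ℂ p] at h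

theorem IsHermitianElem.eq_zero_of_one_sub_two_smul_mul_eq {p r d : A} (hp : IsHermitianElem p)
    (hr : IsHermitianElem r) (hpi : IsIdempotentElem p) (hri : IsIdempotentElem r)
    (hd : d * d = 0) (hprod : (1 - (2 : ℂ) • p) * (1 - (2 : ℂ) • r) = 1 + (2 : ℂ) • d) :
    d = 0 := by
  have hsq : ((2 : ℂ) • d) * ((2 : ℂ) • d) = 0 := by rw [smul_mul_smul_comm, hd, smul_zero]
  have hnorm : ‖1 + (2 : ℂ) • d‖ ≤ 1 := hprod ▸ (norm_mul_le _ _).trans_eq (by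
    rw [hp.norm_one_sub_two_smul hpi, hr.norm_one_sub_two_smul hri, one_mul])
  exact (smul_eq_zero.mp <|
    eq_zero_of_mul_self_eq_zero_of_norm_one_add_le_one hsq hnorm).resolve_left two_ne_zero

theorem IsHermitianElem.eq_of_mul_eq_right {p r : A} (hp : IsHermitianElem p)
    (hr : IsHermitianElem r) (hpi : IsIdempotentElem p) (hri : IsIdempotentElem r)
    (hpr : p * r = r) (hrp : r * p = p) : p = r := by
  refine (sub_eq_zero.mp (hp.eq_zero_of_one_sub_two_smul_mul_eq hr hpi hri (d := r - p) ?_ ?_)).symm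
  · rw [sub_mul, mul_sub, mul_sub, hri.eq, hrp, hpr, hpi.eq, sub_self]
  · rw [sub_mul, one_mul, mul_sub, mul_one, smul_mul_smul_comm, hpr]
    module

theorem IsHermitianElem.eq_of_mul_eq_left {p r : A} (hp : IsHermitianElem p)
    (hr : IsHermitianElem r) (hpi : IsIdempotentElem p) (hri : IsIdempotentElem r)
    (hpr : p * r = p) (hrp : r * p = r) : p = r := by
  refine sub_eq_zero.mp (hp.eq_zero_of_one_sub_two_smul_mul_eq hr hpi hri (d := p - r) ?_ ?_)
  · rw [sub_mul, mul_sub, mul_sub, hpi.eq, hpr, hrp, hri.eq, sub_self, sub_self, sub_zero]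
  · rw [sub_mul, one_mul, mul_sub, mul_one, smul_mul_smul_comm, hpr]
    module

end Hermitian

theorem setOf_mul_eq_zero_eq_singleton_zero_iff {R : Type*} [NonUnitalNonAssocRing R] {y : R} :
    {x : R | y * x = 0} = {0} ↔ IsLeftRegular y := by
  rw [isLeftRegular_iff_right_eq_zero_of_mul, Set.eq_singleton_iff_unique_mem]
  simp

theorem IsLeftRegular.mul_eq_one_of_mul_mul_eq_self {M : Type*} [Monoid M] {b x : M}
    (hb : IsLeftRegular b) (h : b * x * b = b) : x * b = 1 :=
  hb (show b * (x * b) = b * 1 by rw [← mul_assoc, h, mul_one])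

theorem IsRightRegular.mul_eq_one_of_mul_mul_eq_self {M : Type*} [Monoid M] {c x : M}
    (hc : IsRightRegular c) (h : c * x * c = c) : c * x = 1 :=
  hc (show c * x * c = 1 * c by rw [h, one_mul])

section Factorization

variable {M : Type*} [Monoid M] {b bd c cd : M}

theorem isUnit_mul_of_mul_eq_mul (hbl : bd * b = 1) (hcr : c * cd = 1)
    (h : b * bd = cd * c) : IsUnit (c * b) := by
  refine ⟨⟨c * b, bd * cd, ?_, ?_⟩, rfl⟩
  · rw [mul_assoc, ← mul_assoc b, h, ← mul_assoc, ← mul_assoc, hcr, one_mul, hcr]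
  · rw [mul_assoc, ← mul_assoc cd, ← h, ← mul_assoc, ← mul_assoc, hbl, one_mul, hbl]

theorem eq_mul_mul_of_mul_eq_mul (hcr : c * cd = 1) (h : b * bd = cd * c) : c = c * b * bd := by
  rw [mul_assoc, h, ← mul_assoc, hcr, one_mul]

theorem eq_mul_mul_of_mul_eq_mul' (hbl : bd * b = 1) (h : b * bd = cd * c) : bd = bd * cd * c := by
  rw [mul_assoc, ← h, ← mul_assoc, hbl, one_mul]

theorem mul_eq_mul_of_mul_eq_mul_of_mul_eq_mul (hbl : bd * b = 1) (hcr : c * cd = 1)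
    {x y : M} (hx : b * c = cd * x) (hy : b * c = y * bd) : b * bd = cd * c := by
  have hgb : cd * c * b = b :=
    calc cd * c * b = cd * c * b * (c * cd) := by rw [hcr, mul_one]
      _ = cd * c * (cd * x) * cd := by rw [← hx]; simp only [mul_assoc]
      _ = b * c * cd := by rw [← mul_assoc, mul_assoc cd c cd, hcr, mul_one, ← hx]
      _ = b := by rw [mul_assoc, hcr, mul_one]
  have hcf : c * (b * bd) = c :=
    calc c * (b * bd) = bd * b * c * (b * bd) := by rw [hbl, one_mul]
      _ = bd * (y * bd) * b * bd := by rw [← hy]; simp only [mul_assoc]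
      _ = bd * (y * (bd * b) * bd) := by simp only [mul_assoc]
      _ = bd * (b * c) := by rw [hbl, mul_one, hy]
      _ = c := by rw [← mul_assoc, hbl, one_mul]
  calc b * bd = cd * c * b * bd := by rw [hgb]
    _ = cd * (c * (b * bd)) := by simp only [mul_assoc]
    _ = cd * c := by rw [hcf]

theorem mul_eq_mul_iff_exists_mul_eq_mul_and_exists_mul_eq_mul (hb : b * bd * b = b)
    (hbl : bd * b = 1) (hcr : c * cd = 1) :
    b * bd = cd * c ↔ (∃ x, b * c = cd * x) ∧ (∃ y, b * c = y * bd) := by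
  refine ⟨fun h => ⟨⟨c * b * c, ?_⟩, ⟨b * c * b, ?_⟩⟩,
    fun ⟨⟨x, hx⟩, ⟨y, hy⟩⟩ => mul_eq_mul_of_mul_eq_mul_of_mul_eq_mul hbl hcr hx hy⟩
  · conv_lhs => rw [← hb, h]
    simp only [mul_assoc]
  · conv_lhs => rw [eq_mul_mul_of_mul_eq_mul hcr h]
    simp only [mul_assoc]

theorem mul_eq_mul_iff_exists_eq_mul_and_exists_eq_mul {a ad : M} (had : ad * a * ad = ad)
    (haad : a * ad = b * bd) (hada : ad * a = cd * c) (hb : b * bd * b = b) (hcr : c * cd = 1) :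
    b * bd = cd * c ↔ (∃ x, ad = b * x) ∧ (∃ y, ad = y * c) := by
  constructor
  · intro h
    refine ⟨⟨bd * ad, ?_⟩, ⟨ad * cd, ?_⟩⟩
    · rw [← mul_assoc, h, ← hada, had]
    · rw [mul_assoc, ← h, ← haad, ← mul_assoc, had]
  · rintro ⟨⟨x, hx⟩, ⟨y, hy⟩⟩
    have hrange : b * bd * (cd * c) = cd * c := by
      rw [← hada, ← mul_assoc, hx, ← mul_assoc, hb]
    have hker : b * bd * (cd * c) = b * bd := by
      rw [← haad, hy]
      simp only [mul_assoc]
      rw [← mul_assoc c, hcr, one_mul]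
    rw [← hker, hrange]

end Factorization

namespace IsMPInv

variable {A : Type*} [NormedRing A] [NormedAlgebra ℂ A] {a ad b bd c cd : A}

theorem isIdempotentElem_self_mul (h : IsMPInv a ad) : IsIdempotentElem (a * ad) := by
  rw [IsIdempotentElem, ← mul_assoc, h.1]

theorem isIdempotentElem_mul_self (h : IsMPInv a ad) : IsIdempotentElem (ad * a) := by
  rw [IsIdempotentElem, ← mul_assoc, h.2.1]

theorem self_mul_eq_of_eq_mul {x : A} (ha : IsMPInv a ad) (hb : IsMPInv b bd)
    (habc : a = b * c) (hcx : c * x = 1) : a * ad = b * bd := by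
  have hb_mem : a * (x * bd) = b * bd := by rw [habc, mul_assoc, ← mul_assoc c, hcx, one_mul]
  have ha_mem : b * bd * a = a := by rw [habc, ← mul_assoc, hb.1]
  refine ha.2.2.1.eq_of_mul_eq_right hb.2.2.1 ha.isIdempotentElem_self_mul
    hb.isIdempotentElem_self_mul ?_ (by rw [← mul_assoc, ha_mem])
  rw [← hb_mem, ← mul_assoc, ha.1]

theorem mul_self_eq_of_eq_mul {y : A} (ha : IsMPInv a ad) (hc : IsMPInv c cd)
    (habc : a = b * c) (hyb : y * b = 1) : ad * a = cd * c := by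
  have hc_mul : c * (ad * a) = c := by
    have hc_eq : c = y * a := by rw [habc, ← mul_assoc, hyb, one_mul]
    rw [hc_eq, mul_assoc, ← mul_assoc a, ha.1]
  have ha_mul : a * (cd * c) = a := by rw [habc, mul_assoc, ← mul_assoc c, hc.1]
  exact ha.2.2.2.eq_of_mul_eq_left hc.2.2.2 ha.isIdempotentElem_mul_self
    hc.isIdempotentElem_mul_self (by rw [mul_assoc, ha_mul]) (by rw [mul_assoc, hc_mul])

theorem self_mul_eq_mul_self_of_eq_mul {z : A} (hb : IsMPInv b bd) (hc : IsMPInv c cd)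
    (hbl : bd * b = 1) (hcz : c = z * bd) (hbd : bd * (cd * c) = bd) : b * bd = cd * c := by
  have hcf : c * (b * bd) = c := by rw [hcz, mul_assoc, ← mul_assoc bd, hbl, one_mul]
  exact hb.2.2.1.eq_of_mul_eq_left hc.2.2.2 hb.isIdempotentElem_self_mul
    hc.isIdempotentElem_mul_self (by rw [mul_assoc, hbd]) (by rw [mul_assoc, hcf])

theorem self_mul_eq_mul_self_of_eq_mul_of_isLeftRegular {y : A} (hb : IsMPInv b bd)
    (hc : IsMPInv c cd) (hbl : bd * b = 1) (hy : IsLeftRegular y) (hcy : c = y * bd) :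
    b * bd = cd * c :=
  hb.self_mul_eq_mul_self_of_eq_mul hc hbl hcy <|
    hy (show y * (bd * (cd * c)) = y * bd by rw [← mul_assoc, ← hcy, ← mul_assoc, hc.1])

theorem self_mul_eq_mul_self_iff_exists_eq_mul (hb : IsMPInv b bd) (hc : IsMPInv c cd)
    (hbl : bd * b = 1) (hcr : c * cd = 1) :
    b * bd = cd * c ↔ ∃ z₁ z₂, c = z₁ * bd ∧ bd = z₂ * c :=
  ⟨fun h => ⟨c * b, bd * cd, eq_mul_mul_of_mul_eq_mul hcr h, eq_mul_mul_of_mul_eq_mul' hbl h⟩,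
    fun ⟨_, z₂, hcz, hbz⟩ => hb.self_mul_eq_mul_self_of_eq_mul hc hbl hcz <| by
      rw [hbz, mul_assoc, ← mul_assoc c, hc.1]⟩

theorem self_mul_eq_mul_self_iff_exists_isUnit (hb : IsMPInv b bd) (hc : IsMPInv c cd)
    (hbl : bd * b = 1) (hcr : c * cd = 1) :
    b * bd = cd * c ↔ ∃ u, IsUnit u ∧ b = cd * u := by
  refine ⟨fun h => ⟨c * b, isUnit_mul_of_mul_eq_mul hbl hcr h, ?_⟩, fun ⟨_, ⟨U, hU⟩, hbu⟩ => ?_⟩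
  · rw [← mul_assoc, ← h, hb.1]
  subst hU
  have hcd : cd = b * ↑U⁻¹ := by rw [hbu, mul_assoc, Units.mul_inv, mul_one]
  have hfcd : b * bd * cd = cd := by rw [hcd, ← mul_assoc, hb.1]
  have hgb : cd * c * b = b := by
    rw [hbu, ← mul_assoc, mul_assoc cd c cd, hcr, mul_one]
  exact hb.2.2.1.eq_of_mul_eq_right hc.2.2.2 hb.isIdempotentElem_self_mul
    hc.isIdempotentElem_mul_self (by rw [← mul_assoc, hfcd]) (by rw [← mul_assoc, hgb])

end IsMPInv

theorem ep_tfae_factorization_units_general {A : Type*} [NormedRing A] [NormedAlgebra ℂ A]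
    (a b c ad bd cd : A) (had : IsMPInv a ad) (hbd : IsMPInv b bd) (hcd : IsMPInv c cd)
    (habc : a = b * c)
    (hb : {x : A | b * x = 0} = {0}) (hc : {y : A | ∃ x, y = c * x} = Set.univ) :
    List.TFAE
      [a * ad = ad * a,
       ∃ x : A, IsUnit x ∧ c = x * bd,
       ∃ y : A, {x : A | y * x = 0} = {0} ∧ c = y * bd,
       ∃ u : A, IsUnit u ∧ b = cd * u,
       ∃ z₁ z₂ : A, c = z₁ * bd ∧ bd = z₂ * c,
       (∃ x : A, a = cd * x) ∧ (∃ y : A, a = y * bd),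
       (∃ x : A, ad = b * x) ∧ (∃ y : A, ad = y * c)] := by
  have hbl : bd * b = 1 :=
    (setOf_mul_eq_zero_eq_singleton_zero_iff.mp hb).mul_eq_one_of_mul_mul_eq_self hbd.1
  obtain ⟨r, hr⟩ : (1 : A) ∈ {y : A | ∃ x, y = c * x} := hc ▸ Set.mem_univ _
  have hcr : c * cd = 1 :=
    (isRightRegular_of_mul_eq_one hr.symm).mul_eq_one_of_mul_mul_eq_self hcd.1
  have haad : a * ad = b * bd := had.self_mul_eq_of_eq_mul hbd habc hcr
  have hada : ad * a = cd * c := had.mul_self_eq_of_eq_mul hcd habc hbl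
  have hEP : a * ad = ad * a ↔ b * bd = cd * c := by rw [haad, hada]
  tfae_have 1 → 2 := fun h => ⟨c * b, isUnit_mul_of_mul_eq_mul hbl hcr (hEP.mp h),
    eq_mul_mul_of_mul_eq_mul hcr (hEP.mp h)⟩
  tfae_have 2 → 3 := fun ⟨x, hx, hcx⟩ =>
    ⟨x, setOf_mul_eq_zero_eq_singleton_zero_iff.mpr hx.isRegular.left, hcx⟩
  tfae_have 3 → 1 := fun ⟨y, hy, hcy⟩ => hEP.mpr <|
    hbd.self_mul_eq_mul_self_of_eq_mul_of_isLeftRegular hcd hbl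
      (setOf_mul_eq_zero_eq_singleton_zero_iff.mp hy) hcy
  tfae_have 1 ↔ 4 := hEP.trans (hbd.self_mul_eq_mul_self_iff_exists_isUnit hcd hbl hcr)
  tfae_have 1 ↔ 5 := hEP.trans (hbd.self_mul_eq_mul_self_iff_exists_eq_mul hcd hbl hcr)
  tfae_have 1 ↔ 6 := hEP.trans
    (habc ▸ mul_eq_mul_iff_exists_mul_eq_mul_and_exists_mul_eq_mul hbd.1 hbl hcr)
  tfae_have 1 ↔ 7 := hEP.trans
    (mul_eq_mul_iff_exists_eq_mul_and_exists_eq_mul had.2.1 haad hada hbd.1 hcr)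
  tfae_finish

/-- If `a = bc` with `b⁻¹(0) = 0`, `cA = A` and Moore–Penrose inverses `a†`, `b†`, `c†`:
`a` is EP iff `c = xb†` with `x` invertible, iff `c = yb†` with `y⁻¹(0) = 0`, iff
`b = c†u` with `u` invertible, iff `c = z₁b†` and `b† = z₂c`, iff `a ∈ c†A ∩ Ab†`,
iff `a† ∈ bA ∩ Ac`. -/
theorem ep_tfae_factorization_units {A : Type*} [NormedRing A] [NormedAlgebra ℂ A]
    [CompleteSpace A]
    (a b c ad bd cd : A) (had : IsMPInv a ad) (hbd : IsMPInv b bd) (hcd : IsMPInv c cd)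
    (habc : a = b * c)
    (hb : {x : A | b * x = 0} = {0}) (hc : {y : A | ∃ x, y = c * x} = Set.univ) :
    List.TFAE
      [a * ad = ad * a,
       ∃ x : A, IsUnit x ∧ c = x * bd,
       ∃ y : A, {x : A | y * x = 0} = {0} ∧ c = y * bd,
       ∃ u : A, IsUnit u ∧ b = cd * u,
       ∃ z₁ z₂ : A, c = z₁ * bd ∧ bd = z₂ * c,
       (∃ x : A, a = cd * x) ∧ (∃ y : A, a = y * bd),
       (∃ x : A, ad = b * x) ∧ (∃ y : A, ad = y * c)] :=
  ep_tfae_factorization_units_general a b c ad bd cd had hbd hcd habc hb hc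
end
end
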